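/- arXiv:0810.4907 — 2 statements merged into one kernel-verified Lean document; each statement's English description precedes it below -/
import Mathlib

section
/- (Substitution step in the inductive proof.) Let f̃ ∈ K[x₁,…,x_n], b ∈ ℚⁿ, γ ∈ (ℂ*)ⁿ with f̃_b(γ) = 0, and suppose f̃_b(γ₁, x₂,…,x_n) is not identically zero as a polynomial in ℂ[x₂,…,x_n]. Define g̃(x₂,…,x_n) = f̃(γ₁ t^{b₁}, x₂,…,x_n) ∈ K[x₂,…,x_n]. Then the initial form of g̃ at b' = (b₂,…,b_n) satisfies g̃_{b'}(x') = f̃_b(γ₁, x'), hence g̃_{b'}(γ₂,…,γ_n) = 0, and b' ∈ 𝒯(g). -/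
noncomputable section

/-- The field of (generalized) Puiseux series over `ℂ`, modeled as Hahn series
with value group `ℚ` and coefficients in `ℂ`. -/
abbrev K : Type := HahnSeries ℚ ℂ

/-- The principal coefficient of a Puiseux series. -/
def pc (a : K) : ℂ := a.coeff a.order

/-- The weight of the multi-index `i` of `f` at the point `b`:
`o(a_i) + i·b`. -/
def wt {n : ℕ} (f : MvPolynomial (Fin n) K) (b : Fin n → ℚ) (i : Fin n →₀ ℕ) : ℚ :=
  (f.coeff i).order + ∑ j, (i j : ℚ) * b j

/-- The tropicalization `f(b) = min_{i ∈ supp f} (o(a_i) + i·b)`, with value `⊤`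
for the zero polynomial. -/
def trop {n : ℕ} (f : MvPolynomial (Fin n) K) (b : Fin n → ℚ) : WithTop ℚ :=
  f.support.inf fun i => (wt f b i : WithTop ℚ)

/-- The tropical hypersurface `𝒯(f)`: points where the minimum is attained at
least twice. -/
def tropSet {n : ℕ} (f : MvPolynomial (Fin n) K) : Set (Fin n → ℚ) :=
  {b | ∃ i ∈ f.support, ∃ j ∈ f.support, i ≠ j ∧
    (wt f b i : WithTop ℚ) = trop f b ∧ (wt f b j : WithTop ℚ) = trop f b}

/-- The initial form `f̃_b ∈ ℂ[x]` of `f` at `b`. -/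
def initForm {n : ℕ} (f : MvPolynomial (Fin n) K) (b : Fin n → ℚ) :
    MvPolynomial (Fin n) ℂ :=
  ∑ i ∈ f.support.filter fun i => (wt f b i : WithTop ℚ) = trop f b,
    MvPolynomial.monomial i (pc (f.coeff i))

/-- Substitution of a constant `c ∈ K` for the first variable. -/
def substFirst {n : ℕ} (f : MvPolynomial (Fin (n + 1)) K) (c : K) :
    MvPolynomial (Fin n) K :=
  Polynomial.eval (MvPolynomial.C c) (MvPolynomial.finSuccEquiv K n f)

/-- Substitution of a constant `c ∈ ℂ` for the first variable of a complex
polynomial. -/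
def substFirstC {n : ℕ} (p : MvPolynomial (Fin (n + 1)) ℂ) (c : ℂ) :
    MvPolynomial (Fin n) ℂ :=
  Polynomial.eval (MvPolynomial.C c) (MvPolynomial.finSuccEquiv ℂ n p)

/-!
Write `f(t^b x) = ∑ₘ cₘ(t) xᵐ`. The initial form at `b` is read off from the coefficients
`cₘ` alone: if all of them vanish below the exponent `T` and their coefficients at `t^T`
are the coefficients of a nonzero `P`, then `T` is the tropical value and `P` the initial
form. Substituting `x₁ = γ₁ t^{b₁}` merely regroups the monomials of `f(t^b x)`, so this
description passes from `(f, b, f̃_b)` to `(g, b', f̃_b(γ₁, ·))`. Finally, a nonzero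
polynomial vanishing at a point of the torus cannot be a monomial, so the minimum defining
`g(b')` is attained at least twice.
-/

open MvPolynomial

lemma pc_ne_zero {a : K} (ha : a ≠ 0) : pc a ≠ 0 :=
  mt HahnSeries.coeff_order_eq_zero.mp ha

lemma le_order_of_coeff_eq_zero {x : K} {s : ℚ} (hx : x ≠ 0)
    (hlow : ∀ q < s, x.coeff q = 0) : s ≤ x.order :=
  not_lt.mp fun hlt => pc_ne_zero hx (hlow _ hlt)

lemma coeff_eq_ite_of_coeff_eq_zero {x : K} {s : ℚ} (hlow : ∀ q < s, x.coeff q = 0) :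
    x.coeff s = if x.order = s then pc x else 0 := by
  split_ifs with hs
  · rw [pc, hs]
  · by_contra hne
    have hx : x ≠ 0 := HahnSeries.ne_zero_of_coeff_ne_zero hne
    exact hs (le_antisymm (HahnSeries.order_le_of_coeff_ne_zero hne)
      (le_order_of_coeff_eq_zero hx hlow))

section InitialForm

variable {n : ℕ} {h : MvPolynomial (Fin n) K} {b : Fin n → ℚ}

lemma coeff_initForm (m : Fin n →₀ ℕ) :
    (initForm h b).coeff m = if (wt h b m : WithTop ℚ) = trop h b then pc (h.coeff m) else 0 := by
  classical
  simp only [initForm, coeff_sum, coeff_monomial, Finset.sum_ite_eq', Finset.mem_filter,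
    mem_support_iff]
  by_cases h0 : h.coeff m = 0
  · simp [h0, pc]
  · simp [h0]

lemma mem_support_initForm {m : Fin n →₀ ℕ} :
    m ∈ (initForm h b).support ↔ m ∈ h.support ∧ (wt h b m : WithTop ℚ) = trop h b := by
  rw [mem_support_iff, coeff_initForm, mem_support_iff]
  by_cases hw : (wt h b m : WithTop ℚ) = trop h b
  · simp only [hw, if_true, and_true]
    exact ⟨fun hpc h0 => hpc (by rw [h0, pc]; simp), pc_ne_zero⟩
  · simp [hw]

/-- `HasInitialForm h b T P` says that `h(t^b x) = t^T (P(x) + higher order terms)`. -/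
def HasInitialForm (h : MvPolynomial (Fin n) K) (b : Fin n → ℚ) (T : ℚ)
    (P : MvPolynomial (Fin n) ℂ) : Prop :=
  ∀ m : Fin n →₀ ℕ, (∀ q < T - ∑ j, (m j : ℚ) * b j, (h.coeff m).coeff q = 0) ∧
    (h.coeff m).coeff (T - ∑ j, (m j : ℚ) * b j) = P.coeff m

lemma hasInitialForm_initForm {T : ℚ} (hT : trop h b = T) :
    HasInitialForm h b T (initForm h b) := by
  intro m
  rw [coeff_initForm, hT]
  by_cases h0 : h.coeff m = 0
  · simp [h0, pc]
  have hle : T ≤ wt h b m := by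
    have := Finset.inf_le (f := fun i => (wt h b i : WithTop ℚ)) (mem_support_iff.mpr h0)
    rw [← trop, hT] at this
    exact_mod_cast this
  have hlow : ∀ q < T - ∑ j, (m j : ℚ) * b j, (h.coeff m).coeff q = 0 := fun q hq =>
    HahnSeries.coeff_eq_zero_of_lt_order (by rw [wt] at hle; linarith)
  refine ⟨hlow, ?_⟩
  rw [coeff_eq_ite_of_coeff_eq_zero hlow, wt]
  simp only [WithTop.coe_eq_coe]
  exact if_congr ⟨fun hw => by linarith, fun hw => by linarith⟩ rfl rfl

variable {T : ℚ} {P : MvPolynomial (Fin n) ℂ}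

lemma HasInitialForm.trop_eq (H : HasInitialForm h b T P) (hP : P ≠ 0) : trop h b = T := by
  obtain ⟨m, hm⟩ := ne_zero_iff.mp hP
  have hcoeff : (h.coeff m).coeff (T - ∑ j, (m j : ℚ) * b j) ≠ 0 := (H m).2 ▸ hm
  have hwt : wt h b m = T := by
    rw [wt, le_antisymm (HahnSeries.order_le_of_coeff_ne_zero hcoeff)
      (le_order_of_coeff_eq_zero (HahnSeries.ne_zero_of_coeff_ne_zero hcoeff) (H m).1)]
    ring
  refine le_antisymm ?_ (Finset.le_inf fun i hi => ?_)
  · rw [← hwt]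
    exact Finset.inf_le (f := fun i => (wt h b i : WithTop ℚ))
      (mem_support_iff.mpr (HahnSeries.ne_zero_of_coeff_ne_zero hcoeff))
  · have := le_order_of_coeff_eq_zero (mem_support_iff.mp hi) (H i).1
    rw [wt]
    exact_mod_cast (by linarith : T ≤ (h.coeff i).order + ∑ j, (i j : ℚ) * b j)

lemma HasInitialForm.initForm_eq (H : HasInitialForm h b T P) (hP : P ≠ 0) :
    initForm h b = P := by
  ext m
  rw [coeff_initForm, H.trop_eq hP, ← (H m).2, coeff_eq_ite_of_coeff_eq_zero (H m).1, wt]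
  simp only [WithTop.coe_eq_coe]
  exact if_congr ⟨fun hw => by linarith, fun hw => by linarith⟩ rfl rfl

lemma mem_tropSet_of_two_mem_support_initForm {i j : Fin n →₀ ℕ} (hij : i ≠ j)
    (hi : i ∈ (initForm h b).support) (hj : j ∈ (initForm h b).support) : b ∈ tropSet h := by
  rw [mem_support_initForm] at hi hj
  exact ⟨i, hi.1, j, hj.1, hij, hi.2, hj.2⟩

end InitialForm

lemma MvPolynomial.exists_ne_mem_support_of_eval_eq_zero {R σ : Type*} [CommRing R]
    [IsDomain R] {p : MvPolynomial σ R} {x : σ → R} (hp : p ≠ 0) (hx : ∀ j, x j ≠ 0)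
    (hroot : eval x p = 0) : ∃ i ∈ p.support, ∃ j ∈ p.support, i ≠ j := by
  classical
  obtain ⟨i, hi⟩ := support_nonempty.mpr hp
  by_contra! hsingle
  have hmono : p = monomial i (p.coeff i) := by
    ext m
    rw [coeff_monomial]
    split_ifs with hm
    · rw [hm]
    · exact notMem_support_iff.mp fun hm' => hm (hsingle i hi m hm')
  rw [hmono, eval_monomial] at hroot
  exact mul_ne_zero (mem_support_iff.mp hi)
    (Finset.prod_ne_zero_iff.mpr fun j _ => pow_ne_zero _ (hx j)) hroot

section Substitution

variable {R : Type*} [CommSemiring R] {n : ℕ}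

lemma coeff_eval_C_finSuccEquiv (p : MvPolynomial (Fin (n + 1)) R) (c : R) {N : ℕ}
    (hN : p.degreeOf 0 < N) (m : Fin n →₀ ℕ) :
    (Polynomial.eval (C c) (finSuccEquiv R n p)).coeff m =
      ∑ k ∈ Finset.range N, p.coeff (m.cons k) * c ^ k := by
  rw [Polynomial.eval_eq_sum_range' (natDegree_finSuccEquiv p ▸ hN), coeff_sum]
  refine Finset.sum_congr rfl fun k _ => ?_
  rw [← map_pow, mul_comm, coeff_C_mul, finSuccEquiv_coeff_coeff, mul_comm]

lemma coeff_coeff_substFirst_single (f : MvPolynomial (Fin (n + 1)) K) (s : ℚ) (a : ℂ)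
    {N : ℕ} (hN : f.degreeOf 0 < N) (m : Fin n →₀ ℕ) (q : ℚ) :
    ((substFirst f (HahnSeries.single s a)).coeff m).coeff q =
      ∑ k ∈ Finset.range N, (f.coeff (m.cons k)).coeff (q - k * s) * a ^ k := by
  rw [substFirst, coeff_eval_C_finSuccEquiv f _ hN, HahnSeries.coeff_sum]
  refine Finset.sum_congr rfl fun k _ => ?_
  rw [HahnSeries.single_pow, nsmul_eq_mul, ← HahnSeries.coeff_mul_single_add, sub_add_cancel]

lemma sum_cons_mul (m : Fin n →₀ ℕ) (k : ℕ) (b : Fin (n + 1) → ℚ) :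
    ∑ j, ((m.cons k) j : ℚ) * b j = k * b 0 + ∑ j, (m j : ℚ) * (b ∘ Fin.succ) j := by
  simp [Fin.sum_univ_succ]

lemma HasInitialForm.substFirst {f : MvPolynomial (Fin (n + 1)) K} {b : Fin (n + 1) → ℚ}
    {T : ℚ} {P : MvPolynomial (Fin (n + 1)) ℂ} (H : HasInitialForm f b T P) (a : ℂ) :
    HasInitialForm (substFirst f (HahnSeries.single (b 0) a)) (b ∘ Fin.succ) T
      (substFirstC P a) := by
  set N := max (f.degreeOf 0) (P.degreeOf 0) + 1
  have hf : f.degreeOf 0 < N := Nat.lt_succ_of_le (le_max_left _ _)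
  have hP : P.degreeOf 0 < N := Nat.lt_succ_of_le (le_max_right _ _)
  intro m
  simp only [coeff_coeff_substFirst_single f _ a hf]
  constructor
  · intro q hq
    refine Finset.sum_eq_zero fun k _ => ?_
    rw [(H (m.cons k)).1 _ (by rw [sum_cons_mul]; linarith), zero_mul]
  · rw [substFirstC, coeff_eval_C_finSuccEquiv P a hP]
    refine Finset.sum_congr rfl fun k _ => ?_
    rw [← (H (m.cons k)).2, sum_cons_mul, sub_sub, add_comm (∑ j, _)]

lemma eval_substFirstC (p : MvPolynomial (Fin (n + 1)) ℂ) (c : ℂ) (x : Fin n → ℂ) :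
    eval x (substFirstC p c) = eval (Fin.cons c x) p := by
  rw [eval_eq_eval_mv_eval', Polynomial.eval_map, substFirstC, ← Polynomial.eval₂_hom, eval_C]

end Substitution

/-- Substitution step of the inductive proof: if `f̃_b(γ) = 0` but
`f̃_b(γ₁, x₂,…,xₙ)` is not identically zero, then for
`g = f(γ₁ t^{b₁}, x₂,…,xₙ)` one has `g̃_{b'} = f̃_b(γ₁, ·)`, hence
`g̃_{b'}(γ₂,…,γₙ) = 0` and `b' ∈ 𝒯(g)`. -/
theorem substitution_step (n : ℕ) (f : MvPolynomial (Fin (n + 1)) K)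
    (b : Fin (n + 1) → ℚ) (γ : Fin (n + 1) → ℂ) (hγ : ∀ j, γ j ≠ 0)
    (hroot : MvPolynomial.eval γ (initForm f b) = 0)
    (hne : substFirstC (initForm f b) (γ 0) ≠ 0) :
    initForm (substFirst f (HahnSeries.single (b 0) (γ 0))) (b ∘ Fin.succ) =
        substFirstC (initForm f b) (γ 0) ∧
      MvPolynomial.eval (γ ∘ Fin.succ)
        (initForm (substFirst f (HahnSeries.single (b 0) (γ 0)))
          (b ∘ Fin.succ)) = 0 ∧
      (b ∘ Fin.succ) ∈ tropSet (substFirst f (HahnSeries.single (b 0) (γ 0))) := by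
  obtain ⟨i, hi⟩ : (initForm f b).support.Nonempty :=
    support_nonempty.mpr fun h0 => hne (by simp [h0, substFirstC])
  obtain ⟨T, hT⟩ : ∃ T : ℚ, trop f b = T := ⟨_, (mem_support_initForm.mp hi).2.symm⟩
  have hmain := ((hasInitialForm_initForm hT).substFirst (γ 0)).initForm_eq hne
  have heval : eval (γ ∘ Fin.succ) (substFirstC (initForm f b) (γ 0)) = 0 := by
    rw [eval_substFirstC]
    exact (Fin.cons_self_tail γ).symm ▸ hroot
  rw [hmain]
  obtain ⟨i, hi, j, hj, hij⟩ :=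
    exists_ne_mem_support_of_eval_eq_zero hne (fun j => hγ j.succ) heval
  exact ⟨rfl, heval, mem_tropSet_of_two_mem_support_initForm hij (hmain ▸ hi) (hmain ▸ hj)⟩
end
end

section
/- There exists a point (x̃, ỹ) ∈ (K*)² with f̃(x̃, ỹ) = 0 for f̃ = −3t² + 3tx − t²y + txy − t³xy⁴ + (t⁴+t⁵)y⁴ + x⁵, such that o(x̃) = 1, pc(x̃) = 1, o(ỹ) = 0, and pc(ỹ) = −3. -/
noncomputable section

/-- The series `t ∈ K`. -/
def tt : K := HahnSeries.single (1 : ℚ) (1 : ℂ)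

open MvPolynomial in
/-- The polynomial `f̃ = −3t² + 3tx − t²y + txy − t³xy⁴ + (t⁴+t⁵)y⁴ + x⁵`. -/
def fEx : MvPolynomial (Fin 2) K :=
  C (-3 * tt ^ 2) + C (3 * tt) * X 0 + C (-tt ^ 2) * X 1 +
    C tt * X 0 * X 1 + C (-tt ^ 3) * X 0 * X 1 ^ 4 +
    C (tt ^ 4 + tt ^ 5) * X 1 ^ 4 + X 0 ^ 5

/-!
Put `x = t + t²`. The two `y⁴`-terms combine to `t³y⁴(t + t² − x) = 0`, and the remaining terms
factor as `t(x − t)(3 + y) + x⁵ = t³(3 + y) + t⁵(1 + t)⁵`, which vanishes for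
`y = −3 − t²(1 + t)⁵`. Both `x` and `y` are a monomial plus terms of strictly larger order, so the
monomial determines their order and principal coefficient.
-/

namespace HahnSeries

section SingleAdd

variable {Γ R : Type*} [LinearOrder Γ] [AddMonoid R] {g : Γ} {c : R} {b : HahnSeries Γ R}

theorem orderTop_single_add (hc : c ≠ 0) (hb : (g : WithTop Γ) < b.orderTop) :
    (single g c + b).orderTop = g := by
  rw [orderTop_add_eq_left (by rwa [orderTop_single hc]), orderTop_single hc]

theorem leadingCoeff_single_add (hc : c ≠ 0) (hb : (g : WithTop Γ) < b.orderTop) :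
    (single g c + b).leadingCoeff = c := by
  rw [leadingCoeff_add_eq_left (by rwa [orderTop_single hc]), leadingCoeff_of_single]

theorem single_add_ne_zero (hc : c ≠ 0) (hb : (g : WithTop Γ) < b.orderTop) :
    single g c + b ≠ 0 :=
  orderTop_ne_top.mp (by simp [orderTop_single_add hc hb])

theorem order_single_add [Zero Γ] (hc : c ≠ 0) (hb : (g : WithTop Γ) < b.orderTop) :
    (single g c + b).order = g :=
  WithTop.coe_injective <| by
    rw [order_eq_orderTop_of_ne_zero (single_add_ne_zero hc hb), orderTop_single_add hc hb]

end SingleAdd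

end HahnSeries

open HahnSeries

theorem pc_eq_leadingCoeff (a : K) : pc a = a.leadingCoeff := leadingCoeff_eq.symm

theorem tt_pow (n : ℕ) : tt ^ n = single (n : ℚ) 1 := by
  rw [tt, single_pow, nsmul_one, one_pow]

theorem orderTop_tt_pow (n : ℕ) : (tt ^ n).orderTop = (n : ℚ) := by
  rw [tt_pow, orderTop_single one_ne_zero]

theorem orderTop_one_add_tt : (1 + tt).orderTop = 0 := by
  rw [← map_one C, C_apply]
  exact orderTop_single_add one_ne_zero (lt_orderTop_single zero_lt_one)

theorem two_le_orderTop_tt_sq_mul : (2 : WithTop ℚ) ≤ (tt ^ 2 * (1 + tt) ^ 5).orderTop :=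
  calc (2 : WithTop ℚ) = (tt ^ 2).orderTop + 5 • (1 + tt).orderTop := by
        rw [orderTop_tt_pow, orderTop_one_add_tt, smul_zero, add_zero]; rfl
    _ ≤ (tt ^ 2).orderTop + ((1 + tt) ^ 5).orderTop :=
        add_le_add le_rfl orderTop_nsmul_le_orderTop_pow
    _ = (tt ^ 2 * (1 + tt) ^ 5).orderTop := (orderTop_mul _ _).symm

def xEx : K := single 1 1 + tt ^ 2

def yEx : K := single 0 (-3) + -(tt ^ 2 * (1 + tt) ^ 5)

theorem one_lt_orderTop_tt_sq : ((1 : ℚ) : WithTop ℚ) < (tt ^ 2).orderTop := by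
  rw [orderTop_tt_pow]; norm_num

theorem zero_lt_orderTop_neg_tt_sq_mul : ((0 : ℚ) : WithTop ℚ) < (-(tt ^ 2 * (1 + tt) ^ 5)).orderTop := by
  rw [orderTop_neg]
  exact lt_of_lt_of_le (by norm_num) two_le_orderTop_tt_sq_mul

theorem eval_fEx_xEx_yEx : MvPolynomial.eval ![xEx, yEx] fEx = 0 := by
  have hx : xEx = tt + tt ^ 2 := rfl
  have hy : yEx = -3 - tt ^ 2 * (1 + tt) ^ 5 := by
    rw [yEx, ← C_apply, map_neg, map_ofNat, sub_eq_add_neg]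
  simp only [fEx, MvPolynomial.eval_add, MvPolynomial.eval_mul, MvPolynomial.eval_pow,
    MvPolynomial.eval_C, MvPolynomial.eval_X, Matrix.cons_val_zero, Matrix.cons_val_one]
  rw [hx, hy]
  ring

/-- There is a root `(x̃, ỹ) ∈ (K*)²` of
`f̃ = −3t² + 3tx − t²y + txy − t³xy⁴ + (t⁴+t⁵)y⁴ + x⁵` with `o(x̃) = 1`,
`pc(x̃) = 1`, `o(ỹ) = 0` and `pc(ỹ) = −3`. -/
theorem example_root_exists :
    ∃ x y : K, x ≠ 0 ∧ y ≠ 0 ∧ MvPolynomial.eval ![x, y] fEx = 0 ∧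
      x.order = 1 ∧ pc x = 1 ∧ y.order = 0 ∧ pc y = -3 := by
  have hx := one_lt_orderTop_tt_sq
  have hy := zero_lt_orderTop_neg_tt_sq_mul
  have h3 : (-3 : ℂ) ≠ 0 := by norm_num
  refine ⟨xEx, yEx, single_add_ne_zero one_ne_zero hx, single_add_ne_zero h3 hy,
    eval_fEx_xEx_yEx, order_single_add one_ne_zero hx, ?_, order_single_add h3 hy, ?_⟩
  · rw [pc_eq_leadingCoeff, xEx, leadingCoeff_single_add one_ne_zero hx]
  · rw [pc_eq_leadingCoeff, yEx, leadingCoeff_single_add h3 hy]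
end
end
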